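/- Let D be a weighted digraph on a finite vertex set V and let χ be the minimum number of independent sets of D into which V can be partitioned (the chromatic number of the underlying graph of D). If χ is even then mac(D) ≥ (1/4 + 1/(4(χ−1)))·w(D), and if χ is odd then mac(D) ≥ (1/4 + 1/(4χ))·w(D). -/

import Mathlib

open scoped BigOperators Classical

noncomputable section

namespace PaperStmt

variable {V : Type*} [Fintype V]

/-- Total weight of a weighted digraph given by `w : V → V → ℝ`. -/
def totalWeight (w : V → V → ℝ) : ℝ := ∑ u, ∑ v, w u v

/-- Weight of the dicut `(X, Xᶜ)`. -/
def cutWeight (w : V → V → ℝ) (X : Finset V) : ℝ := ∑ x ∈ X, ∑ y ∈ Xᶜ, w x y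

/-- Maximum weight of a directed cut. -/
def mac (w : V → V → ℝ) : ℝ :=
  Finset.univ.sup' ⟨∅, Finset.mem_univ ∅⟩ (fun X : Finset V => cutWeight w X)

/-- `r(v) = w⁺(v) - w⁻(v)`. -/
def rv (w : V → V → ℝ) (v : V) : ℝ := (∑ u, w v u) - (∑ u, w u v)

/-- `r⁺(D) = ∑_{v : r(v) > 0} r(v)`. -/
def rPlus (w : V → V → ℝ) : ℝ :=
  ∑ v ∈ Finset.univ.filter (fun v => 0 < rv w v), rv w v

/-! Colour `V` properly with `χ` colours. For every set `S` of `m` colours, the vertices coloured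
in `S` give a dicut; an arc `uv` joins two different colours and is cut by exactly
`(χ - 2).choose (m - 1)` of the `χ.choose m` choices of `S`. Averaging over `S` gives
`mac ≥ m (χ - m) / (χ (χ - 1)) · w(D)`, and `m = ⌊χ / 2⌋` yields the two bounds. -/

open Finset

theorem _root_.Finset.card_filter_mem_notMem_powersetCard {α : Type*} [DecidableEq α]
    {s : Finset α} {a b : α} (ha : a ∈ s) (hb : b ∈ s) (hab : a ≠ b) (m : ℕ) :
    #{S ∈ powersetCard (m + 1) s | a ∈ S ∧ b ∉ S} = (#s - 2).choose m := by
  have hcard : #((s.erase a).erase b) = #s - 2 := by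
    rw [card_erase_of_mem (mem_erase.2 ⟨hab.symm, hb⟩), card_erase_of_mem ha]; omega
  rw [← hcard, ← card_powersetCard]
  refine card_nbij' (·.erase a) (insert a) ?_ ?_ ?_ ?_ <;> intro S hS <;>
    simp only [coe_filter, mem_powersetCard, Set.mem_ofPred_eq, mem_coe] at hS ⊢ <;> grind

theorem _root_.Nat.choose_mul_add_two_mul_add_one (n m : ℕ) :
    n.choose m * ((n + 2) * (n + 1)) = (n + 2).choose (m + 1) * ((m + 1) * (n + 1 - m)) := by
  have h₁ := Nat.choose_mul_succ_eq n m
  have h₂ := Nat.add_one_mul_choose_eq (n + 1) m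
  calc n.choose m * ((n + 2) * (n + 1)) = (n + 2) * ((n + 1).choose m * (n + 1 - m)) := by
        rw [← h₁]; ring
    _ = _ := by rw [← mul_assoc, h₂]; ring

theorem cutWeight_eq_sum_ite (w : V → V → ℝ) (X : Finset V) :
    cutWeight w X = ∑ u, ∑ v, if u ∈ X ∧ v ∉ X then w u v else 0 := by
  simp only [cutWeight, ite_and, ← mem_compl, sum_ite_irrel, sum_const_zero, Fintype.sum_ite_mem]

theorem cutWeight_le_mac (w : V → V → ℝ) (X : Finset V) : cutWeight w X ≤ mac w :=
  le_sup' (fun X => cutWeight w X) (mem_univ X)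

theorem mac_nonneg (w : V → V → ℝ) : 0 ≤ mac w := by
  simpa [cutWeight] using cutWeight_le_mac w ∅

theorem totalWeight_eq_zero_of_coloring_fin_one {w : V → V → ℝ} {f : V → Fin 1}
    (hf : ∀ u v, f u = f v → w u v = 0) : totalWeight w = 0 :=
  sum_eq_zero fun u _ => sum_eq_zero fun v _ => hf u v (Subsingleton.elim _ _)

variable {w : V → V → ℝ} {k : ℕ} {f : V → Fin k}

theorem sum_cutWeight_preimage_powersetCard (hf : ∀ u v, f u = f v → w u v = 0) (m : ℕ) :
    ∑ S ∈ powersetCard (m + 1) (univ : Finset (Fin k)), cutWeight w {v | f v ∈ S} =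
      (k - 2).choose m * totalWeight w := by
  simp only [cutWeight_eq_sum_ite, mem_filter_univ, totalWeight, mul_sum]
  rw [sum_comm]
  refine sum_congr rfl fun u _ => ?_
  rw [sum_comm]
  refine sum_congr rfl fun v _ => ?_
  by_cases huv : f u = f v
  · simp [huv, hf u v huv]
  · rw [← sum_filter, sum_const,
      card_filter_mem_notMem_powersetCard (mem_univ _) (mem_univ _) huv, card_univ,
      Fintype.card_fin, nsmul_eq_mul]

theorem choose_mul_totalWeight_le_mac (hf : ∀ u v, f u = f v → w u v = 0) (m : ℕ) :
    (k - 2).choose m * totalWeight w ≤ k.choose (m + 1) * mac w := by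
  have hcard : #(powersetCard (m + 1) (univ : Finset (Fin k))) = k.choose (m + 1) := by simp
  rw [← sum_cutWeight_preimage_powersetCard hf, ← hcard, ← nsmul_eq_mul, ← sum_const]
  exact sum_le_sum fun S _ => cutWeight_le_mac w _

theorem mul_totalWeight_le_mac (hf : ∀ u v, f u = f v → w u v = 0) (hk : 2 ≤ k) {m : ℕ}
    (hm : m ≤ k) : m * (k - m) / (k * (k - 1)) * totalWeight w ≤ mac w := by
  obtain ⟨n, rfl⟩ := Nat.exists_eq_add_of_le' hk
  rcases m.eq_zero_or_pos with rfl | hm0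
  · simpa using mac_nonneg w
  obtain ⟨j, rfl⟩ := Nat.exists_eq_add_of_le' hm0
  have hpos : (0 : ℝ) < (n + 2).choose (j + 1) := by exact_mod_cast Nat.choose_pos hm
  have hcoeff :
      ((j + 1 : ℕ) : ℝ) * ((n + 2 : ℕ) - (j + 1 : ℕ)) / ((n + 2 : ℕ) * ((n + 2 : ℕ) - 1)) =
        n.choose j / (n + 2).choose (j + 1) := by
    have h := congrArg (Nat.cast : ℕ → ℝ) (Nat.choose_mul_add_two_mul_add_one n j)
    push_cast [Nat.cast_sub (show j ≤ n + 1 by omega)] at h ⊢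
    rw [div_eq_div_iff (by ring_nf; positivity) hpos.ne']
    linear_combination -h
  rw [hcoeff, div_mul_eq_mul_div, div_le_iff₀ hpos, mul_comm (mac w)]
  simpa using choose_mul_totalWeight_le_mac hf j

theorem chromatic_lower_bound {V : Type*} [Fintype V]
    (w : V → V → ℝ) (χ : ℕ)
    (hχ : IsLeast {n : ℕ | ∃ f : V → Fin n, ∀ u v : V, f u = f v → w u v = 0} χ) :
    (Even χ → (1 / 4 + 1 / (4 * ((χ : ℝ) - 1))) * totalWeight w ≤ mac w) ∧
    (Odd χ → (1 / 4 + 1 / (4 * (χ : ℝ))) * totalWeight w ≤ mac w) := by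
  obtain ⟨f, hf⟩ := hχ.1
  constructor
  · rintro ⟨c, rfl⟩
    rcases c.eq_zero_or_pos with rfl | hc
    · norm_num [mac_nonneg]
    · have hc : (1 : ℝ) ≤ c := by exact_mod_cast hc
      convert mul_totalWeight_le_mac hf (by omega) (m := c) (by omega) using 2
      push_cast
      rw [div_add_div _ _ (by norm_num) (by linarith),
        div_eq_div_iff (by nlinarith) (by nlinarith)]
      ring
  · rintro ⟨d, rfl⟩
    rcases d.eq_zero_or_pos with rfl | hd
    · simp [totalWeight_eq_zero_of_coloring_fin_one hf, mac_nonneg]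
    · convert mul_totalWeight_le_mac hf (by omega) (m := d) (by omega) using 2
      push_cast
      field_simp
      ring

end PaperStmt
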